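/- arXiv:1009.0230 — 2 statements merged into one kernel-verified Lean document; each statement's English description precedes it below -/
import Mathlib

section
/- Let Delta_0, Delta_1, ..., Delta_n be polytopes in R^n and let delta(I) = dim(sum_{j in I} Delta_j) for subsets I. For subsets I, J of {0,...,n}, dim(Delta_{I∩J}) + dim(Delta_{I∪J}) <= dim(Delta_I) + dim(Delta_J), where Delta_K denotes the Minkowski sum of Delta_j over j in K (with Delta_emptyset = {0}). -/
open scoped Pointwise

/-- A polytope: the convex hull of a nonempty finite set of points. -/
def IsPolytope {V : Type*} [AddCommGroup V] [Module ℝ V] (P : Set V) : Prop :=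
  ∃ s : Finset V, s.Nonempty ∧ P = convexHull ℝ (s : Set V)

/-- The dimension of (the affine span of) a subset of a real vector space. -/
noncomputable def polyDim {V : Type*} [AddCommGroup V] [Module ℝ V] (P : Set V) : ℕ :=
  Module.finrank ℝ (affineSpan ℝ P).direction

/-!
The direction of the affine span of a Minkowski sum of nonempty sets is the sum of the
directions of the summands, so `K ↦ dim Δ_K` is the rank function `K ↦ dim (⨆ j ∈ K, W j)` of
a family of subspaces `W j`. Submodularity then follows from the modular law
`dim (U ⊓ U') + dim (U ⊔ U') = dim U + dim U'` applied to `U = ⨆ j ∈ I, W j` and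
`U' = ⨆ j ∈ J, W j`, since `⨆ j ∈ I ∪ J, W j = U ⊔ U'` and `⨆ j ∈ I ∩ J, W j ≤ U ⊓ U'`.
-/

theorem IsPolytope.nonempty {V : Type*} [AddCommGroup V] [Module ℝ V] {P : Set V}
    (hP : IsPolytope P) : P.Nonempty := by
  obtain ⟨s, hs, rfl⟩ := hP
  exact hs.to_set.convexHull

section VectorSpan

variable {k V : Type*} [Ring k] [AddCommGroup V] [Module k V]

theorem vectorSpan_add {A B : Set V} (hA : A.Nonempty) (hB : B.Nonempty) :
    vectorSpan k (A + B) = vectorSpan k A ⊔ vectorSpan k B := by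
  obtain ⟨a, ha⟩ := hA
  obtain ⟨b, hb⟩ := hB
  refine le_antisymm ?_ (sup_le ?_ ?_)
  · rw [vectorSpan_def, Submodule.span_le]
    rintro _ ⟨_, ⟨a₁, ha₁, b₁, hb₁, rfl⟩, _, ⟨a₂, ha₂, b₂, hb₂, rfl⟩, rfl⟩
    change (a₁ + b₁) - (a₂ + b₂) ∈ _
    rw [add_sub_add_comm]
    exact Submodule.add_mem _
      (Submodule.mem_sup_left (vsub_mem_vectorSpan k ha₁ ha₂))
      (Submodule.mem_sup_right (vsub_mem_vectorSpan k hb₁ hb₂))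
  · rw [← vectorSpan_vadd k A b, add_comm]
    exact vectorSpan_mono k (Set.vadd_set_subset_add hb)
  · rw [← vectorSpan_vadd k B a]
    exact vectorSpan_mono k (Set.vadd_set_subset_add ha)

theorem vectorSpan_finset_sum {ι : Type*} {Δ : ι → Set V} (hΔ : ∀ j, (Δ j).Nonempty)
    (K : Finset ι) : vectorSpan k (∑ j ∈ K, Δ j) = ⨆ j ∈ K, vectorSpan k (Δ j) := by
  classical
  induction K using Finset.induction with
  | empty => simp [← Set.singleton_zero]
  | @insert i K hi ih =>
    have hsum : (∑ j ∈ K, Δ j).Nonempty :=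
      ⟨_, Set.finsetSum_mem_finsetSum K Δ (fun j => (hΔ j).some) fun j _ => (hΔ j).some_mem⟩
    rw [Finset.sum_insert hi, vectorSpan_add (hΔ i) hsum, ih, Finset.iSup_insert]

end VectorSpan

theorem Submodule.finrank_iSup_inter_add_finrank_iSup_union_le {K V ι : Type*} [DivisionRing K]
    [AddCommGroup V] [Module K V] [FiniteDimensional K V] [DecidableEq ι]
    (W : ι → Submodule K V) (I J : Finset ι) :
    Module.finrank K ↥(⨆ j ∈ I ∩ J, W j) + Module.finrank K ↥(⨆ j ∈ I ∪ J, W j) ≤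
      Module.finrank K ↥(⨆ j ∈ I, W j) + Module.finrank K ↥(⨆ j ∈ J, W j) := by
  have hinter : ⨆ j ∈ I ∩ J, W j ≤ (⨆ j ∈ I, W j) ⊓ ⨆ j ∈ J, W j :=
    iSup₂_le fun j hj => le_inf (le_biSup W (Finset.mem_inter.1 hj).1)
      (le_biSup W (Finset.mem_inter.1 hj).2)
  calc Module.finrank K ↥(⨆ j ∈ I ∩ J, W j) + Module.finrank K ↥(⨆ j ∈ I ∪ J, W j)
      ≤ Module.finrank K ↥((⨆ j ∈ I, W j) ⊓ ⨆ j ∈ J, W j) +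
          Module.finrank K ↥((⨆ j ∈ I, W j) ⊔ ⨆ j ∈ J, W j) := by
        rw [Finset.iSup_union]
        gcongr
        exact Submodule.finrank_mono hinter
    _ = Module.finrank K ↥(⨆ j ∈ I, W j) + Module.finrank K ↥(⨆ j ∈ J, W j) := by
        rw [add_comm, Submodule.finrank_sup_add_finrank_inf_eq]

theorem polyDim_finset_sum {V ι : Type*} [AddCommGroup V] [Module ℝ V] {Δ : ι → Set V}
    (hΔ : ∀ j, (Δ j).Nonempty) (K : Finset ι) :
    polyDim (∑ j ∈ K, Δ j) = Module.finrank ℝ ↥(⨆ j ∈ K, vectorSpan ℝ (Δ j)) := by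
  rw [polyDim, direction_affineSpan, vectorSpan_finset_sum hΔ]

/-- Submodularity of the dimension of Minkowski sums: for polytopes
`Δ_0, Δ_1, ..., Δ_n` in `ℝ^n` and subsets `I, J ⊆ {0,...,n}`,
`dim Δ_{I∩J} + dim Δ_{I∪J} ≤ dim Δ_I + dim Δ_J`, where `Δ_K = ∑_{j∈K} Δ_j`
(the empty Minkowski sum being `{0}`). -/
theorem dim_minkowski_sum_submodular (n : ℕ)
    (Δ : Fin (n + 1) → Set (Fin n → ℝ)) (hΔ : ∀ j, IsPolytope (Δ j))
    (I J : Finset (Fin (n + 1))) :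
    polyDim (∑ j ∈ I ∩ J, Δ j) + polyDim (∑ j ∈ I ∪ J, Δ j) ≤
      polyDim (∑ j ∈ I, Δ j) + polyDim (∑ j ∈ J, Δ j) := by
  simp only [polyDim_finset_sum fun j => (hΔ j).nonempty]
  exact Submodule.finrank_iSup_inter_add_finrank_iSup_union_le _ I J
end

section
/- Let Delta_1,...,Delta_n and Delta_0 = {p} be as follows: Delta_1,...,Delta_n are linearly independent segments with endpoints in a full-rank lattice L of Z^n and p is any point of R^n. For J a subset of {1,...,n} let Delta_{ {0} ∪ J } = p + sum_{j in J} Delta_j. Then sum over J of (-1)^{|J|} * natural(Delta_{ {0} ∪ J }) = sum over J of (-1)^{n-|J|} * #(Delta_{ {0} ∪ J } ∩ L) = #((hat(Delta_1)+...+hat(Delta_n)+p) ∩ L), where natural(B) = (-1)^{dim B} #(relint(B) ∩ L) and hat(Delta_j) is Delta_j with one chosen endpoint removed. -/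
open scoped Pointwise
open MeasureTheory

/-- `natural(B) = (-1)^{dim B} · #(relint(B) ∩ L)` for a lattice `L`. -/
noncomputable def latNatural {n : ℕ} (L : AddSubgroup (Fin n → ℝ)) (B : Set (Fin n → ℝ)) : ℤ :=
  (-1) ^ polyDim B * (intrinsicInterior ℝ B ∩ (L : Set (Fin n → ℝ))).ncard

/-!
Write `Δ_j = [a_j, a_j + v_j]` and parametrize by `θ ↦ p + ∑ θ_j v_j`. Up to the lattice translation
by `∑_{j ∈ J} a_j`, the parallelepiped `p + Δ_J` is the image of the face of `[0,1]^n` on which the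
coordinates outside `J` vanish, its relative interior is the image of the open face, and its
dimension is `|J|`. All lattice counts thus become counts of the set `T` of parameters mapped into
`L`, which is `ℤ^n`-periodic because every `v_j` lies in `L`. Once the signs cancel, the first sum
counts `T ∩ [0,1)^n`, since the open faces partition `[0,1)^n`; Möbius inversion over the support
of `θ` turns the second sum into `#(T ∩ (0,1]^n)`, the count for the half-open sum. Finally
`[0,1)^n` and `(0,1]^n` meet `T` equally often: reduce each coordinate modulo `1`.
-/

open Set Function
open scoped Finset

section IntrinsicInterior

variable {V W : Type*} [NormedAddCommGroup V] [NormedSpace ℝ V]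
  [NormedAddCommGroup W] [NormedSpace ℝ W]

theorem AffineMap.intrinsicInterior_image_of_injective [FiniteDimensional ℝ V] (φ : V →ᵃ[ℝ] W)
    (hφ : Injective φ) (s : Set V) : intrinsicInterior ℝ (φ '' s) = φ '' intrinsicInterior ℝ s := by
  obtain rfl | hs := s.eq_empty_or_nonempty
  · simp
  have : Nonempty s := hs.to_subtype
  let e : affineSpan ℝ s ≃ₜ (affineSpan ℝ s).map φ :=
    ((affineSpan ℝ s).equivMapOfInjective φ hφ).toContinuousAffineEquiv.toHomeomorph
  have he : φ ∘ (↑) ∘ e.symm = (↑) := by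
    funext x
    exact congr_arg Subtype.val (((affineSpan ℝ s).equivMapOfInjective φ hφ).apply_symm_apply x)
  rw [intrinsicInterior, intrinsicInterior, ← AffineSubspace.map_span φ s, ← he,
    ← Function.comp_assoc, image_comp, image_comp, e.symm.image_interior, e.image_symm,
    ← preimage_comp, Function.comp_assoc, e.symm_comp_self, Function.comp_id, preimage_comp,
    hφ.preimage_image]

theorem intrinsicInterior_eq_interior_of_affineSpan_eq_top {s : Set V}
    (h : affineSpan ℝ s = ⊤) : intrinsicInterior ℝ s = interior s := by
  refine interior_subset_intrinsicInterior.antisymm' ?_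
  have hopen : IsOpen (affineSpan ℝ s : Set V) := by simp [h]
  exact interior_maximal ((image_mono interior_subset).trans (image_preimage_subset _ _))
    (hopen.isOpenMap_subtype_val _ isOpen_interior)

end IntrinsicInterior

theorem AffineMap.polyDim_image_of_injective {V W : Type*} [AddCommGroup V] [Module ℝ V]
    [AddCommGroup W] [Module ℝ W] (φ : V →ᵃ[ℝ] W) (hφ : Injective φ) (s : Set V) :
    polyDim (φ '' s) = polyDim s := by
  rw [polyDim, polyDim, ← AffineSubspace.map_span, AffineSubspace.map_direction]
  exact (Submodule.equivMapOfInjective _ (φ.linear_injective_iff.mpr hφ) _).finrank_eq.symm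

theorem Set.fintype_sum_image_eq_image_pi {ι α M : Type*} [Fintype ι] [AddCommMonoid M]
    (f : ι → α → M) (A : ι → Set α) :
    ∑ i, f i '' A i = (fun θ => ∑ i, f i (θ i)) '' univ.pi A := by
  rw [← image_fintype_sum_pi, ← piMap_image_univ_pi, image_image]
  rfl

theorem Set.ncard_inter_eq_card_filter {α : Type*} {K X T : Set α} (hX : X ⊆ K)
    (hKT : (K ∩ T).Finite) [DecidablePred (· ∈ X)] :
    (X ∩ T).ncard = #{x ∈ hKT.toFinset | x ∈ X} := by
  rw [← ncard_coe_finset]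
  congr 1
  ext x
  simp only [mem_inter_iff, Finset.coe_filter, Finite.mem_toFinset, mem_ofPred_eq]
  exact ⟨fun ⟨hx, hT⟩ => ⟨⟨hX hx, hT⟩, hx⟩, fun ⟨⟨_, hT⟩, hx⟩ => ⟨hx, hT⟩⟩

section Combinatorics

variable {ι : Type*} [Fintype ι] [DecidableEq ι]

theorem Finset.sum_powerset_neg_one_pow_card_compl_mul_ite_subset (σ : Finset ι) :
    ∑ J ∈ (Finset.univ : Finset ι).powerset,
      (-1 : ℤ) ^ (Fintype.card ι - #J) * (if σ ⊆ J then 1 else 0) =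
      if σ = Finset.univ then 1 else 0 := by
  rw [Finset.powerset_univ, ← Equiv.sum_comp (compl_involutive.toPerm _)]
  simp only [Involutive.coe_toPerm, Finset.card_compl,
    Nat.sub_sub_self (Finset.card_le_univ _), Finset.subset_compl_comm (s := σ), mul_ite, mul_one,
    mul_zero]
  rw [← Finset.sum_filter, Finset.filter_subset_univ, Finset.sum_powerset_neg_one_pow_card]
  simp_rw [Finset.compl_eq_empty_iff]

theorem Finset.sum_powerset_neg_one_pow_card_compl_mul_card_filter_subset {α : Type*}
    (S : Finset α) (s : α → Finset ι) :
    ∑ J ∈ (Finset.univ : Finset ι).powerset,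
      (-1 : ℤ) ^ (Fintype.card ι - #J) * #{x ∈ S | s x ⊆ J} =
      #{x ∈ S | s x = Finset.univ} := by
  simp_rw [Finset.natCast_card_filter, Finset.mul_sum]
  rw [Finset.sum_comm]
  simp_rw [Finset.sum_powerset_neg_one_pow_card_compl_mul_ite_subset]

end Combinatorics

section UnitCube

variable {ι : Type*} [Fintype ι]

theorem affineSpan_pi_Icc_eq_top :
    affineSpan ℝ (univ.pi fun _ : ι => Icc (0 : ℝ) 1) = ⊤ := by
  have hne : (fun _ => 1 / 2) ∈ interior (univ.pi fun _ : ι => Icc (0 : ℝ) 1) := by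
    rw [interior_pi_set finite_univ]
    intro j _
    rw [interior_Icc]
    constructor <;> norm_num
  exact top_unique <| (isOpen_interior.affineSpan_eq_top ⟨_, hne⟩).ge.trans
    (affineSpan_mono ℝ interior_subset)

theorem intrinsicInterior_pi_Icc :
    intrinsicInterior ℝ (univ.pi fun _ : ι => Icc (0 : ℝ) 1) =
      univ.pi fun _ => Ioo (0 : ℝ) 1 := by
  rw [intrinsicInterior_eq_interior_of_affineSpan_eq_top (V := ι → ℝ) affineSpan_pi_Icc_eq_top,
    interior_pi_set finite_univ]
  simp only [interior_Icc]

theorem polyDim_pi_Icc : polyDim (univ.pi fun _ : ι => Icc (0 : ℝ) 1) = Fintype.card ι := by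
  rw [polyDim, affineSpan_pi_Icc_eq_top, AffineSubspace.direction_top]
  simp

theorem mem_pi_Ioc_iff {θ : ι → ℝ} (hθ : θ ∈ univ.pi fun _ => Icc (0 : ℝ) 1) :
    θ ∈ univ.pi (fun _ => Ioc 0 1) ↔ ({j | θ j ≠ 0} : Finset ι) = Finset.univ := by
  simp only [mem_univ_pi, Finset.eq_univ_iff_forall, Finset.mem_filter, Finset.mem_univ, true_and]
  refine forall_congr' fun j => ?_
  simp [(hθ j trivial).2, (hθ j trivial).1.lt_iff_ne']

end UnitCube

section SupportedPi

variable {ι : Type*} [DecidableEq ι]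

def supportedPi {α : Type*} [Zero α] (J : Finset ι) (A : Set α) : Set (ι → α) :=
  univ.pi fun j => if j ∈ J then A else {0}

theorem supportedPi_subset_pi {α : Type*} [Zero α] {A B : Set α} (hAB : A ⊆ B) (h0 : 0 ∈ B)
    (J : Finset ι) : supportedPi J A ⊆ univ.pi fun _ => B :=
  pi_mono fun j _ => by
    split_ifs
    exacts [hAB, singleton_subset_iff.mpr h0]

def extendByZero (J : Finset ι) : (J → ℝ) →ₗ[ℝ] (ι → ℝ) where
  toFun t j := if h : j ∈ J then t ⟨j, h⟩ else 0
  map_add' s t := by funext j; by_cases h : j ∈ J <;> simp [h]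
  map_smul' r t := by funext j; by_cases h : j ∈ J <;> simp [h]

theorem extendByZero_injective (J : Finset ι) : Injective (extendByZero J) := fun s t h =>
  funext fun j => by simpa [extendByZero] using congr_fun h j

theorem image_extendByZero_pi (J : Finset ι) (A : Set ℝ) :
    extendByZero J '' univ.pi (fun _ => A) = supportedPi J A := by
  ext θ
  simp only [supportedPi, mem_image, mem_univ_pi, extendByZero, LinearMap.coe_mk, AddHom.coe_mk]
  constructor
  · rintro ⟨t, ht, rfl⟩ j
    by_cases h : j ∈ J <;> simp [h, ht]
  · intro hθ
    refine ⟨fun j => θ j, fun j => by simpa [j.2] using hθ j, funext fun j => ?_⟩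
    by_cases h : j ∈ J
    · simp [h]
    · simpa [h, eq_comm] using hθ j

theorem polyDim_supportedPi_Icc (J : Finset ι) :
    polyDim (supportedPi J (Icc (0 : ℝ) 1)) = #J := by
  rw [← image_extendByZero_pi, ← LinearMap.coe_toAffineMap,
    AffineMap.polyDim_image_of_injective _ (extendByZero_injective J), polyDim_pi_Icc,
    Fintype.card_coe]

end SupportedPi

section Faces

variable {ι : Type*} [Fintype ι] [DecidableEq ι]

theorem intrinsicInterior_supportedPi_Icc (J : Finset ι) :
    intrinsicInterior ℝ (supportedPi J (Icc (0 : ℝ) 1)) = supportedPi J (Ioo 0 1) := by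
  rw [← image_extendByZero_pi, ← image_extendByZero_pi, ← LinearMap.coe_toAffineMap,
    AffineMap.intrinsicInterior_image_of_injective _ (extendByZero_injective J),
    intrinsicInterior_pi_Icc]

theorem mem_supportedPi_Icc_iff {θ : ι → ℝ} (hθ : θ ∈ univ.pi fun _ => Icc (0 : ℝ) 1)
    (J : Finset ι) :
    θ ∈ supportedPi J (Icc 0 1) ↔ ({j | θ j ≠ 0} : Finset ι) ⊆ J := by
  simp only [supportedPi, mem_univ_pi, Finset.subset_iff, Finset.mem_filter, Finset.mem_univ,
    true_and]
  refine forall_congr' fun j => ?_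
  by_cases hj : j ∈ J <;> simp [hj, hθ j trivial]

theorem mem_supportedPi_Ioo_iff {θ : ι → ℝ} (hθ : θ ∈ univ.pi fun _ => Icc (0 : ℝ) 1)
    (J : Finset ι) :
    θ ∈ supportedPi J (Ioo 0 1) ↔
      θ ∈ univ.pi (fun _ => Ico 0 1) ∧ ({j | θ j ≠ 0} : Finset ι) = J := by
  simp only [supportedPi, mem_univ_pi, Finset.ext_iff, Finset.mem_filter, Finset.mem_univ,
    true_and, ← forall_and]
  refine forall_congr' fun j => ?_
  have := hθ j trivial
  by_cases hj : j ∈ J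
  · simp [hj, this.1, this.1.lt_iff_ne', this.2.lt_iff_ne, and_comm]
  · simp +contextual [hj]

theorem sum_neg_one_pow_mul_ncard_supportedPi_Icc_inter {T : Set (ι → ℝ)}
    (hT : ((univ.pi fun _ => Icc (0 : ℝ) 1) ∩ T).Finite) :
    ∑ J ∈ (Finset.univ : Finset ι).powerset, (-1 : ℤ) ^ (Fintype.card ι - #J) *
      (supportedPi J (Icc (0 : ℝ) 1) ∩ T).ncard =
      ((univ.pi fun _ => Ioc (0 : ℝ) 1) ∩ T).ncard := by
  classical
  have hsub : ∀ J : Finset ι, supportedPi J (Icc (0 : ℝ) 1) ⊆ univ.pi fun _ => Icc 0 1 :=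
    supportedPi_subset_pi subset_rfl (left_mem_Icc.mpr zero_le_one)
  have hIoc : (univ.pi fun _ : ι => Ioc (0 : ℝ) 1) ⊆ univ.pi fun _ => Icc 0 1 :=
    pi_mono fun _ _ => Ioc_subset_Icc_self
  simp_rw [ncard_inter_eq_card_filter (hsub _) hT, ncard_inter_eq_card_filter hIoc hT]
  have hcube : ∀ θ ∈ hT.toFinset, θ ∈ univ.pi fun _ => Icc (0 : ℝ) 1 := fun θ hθ =>
    ((Finite.mem_toFinset hT).mp hθ).1
  rw [Finset.filter_congr fun θ hθ => mem_pi_Ioc_iff (hcube θ hθ),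
    ← Finset.sum_powerset_neg_one_pow_card_compl_mul_card_filter_subset]
  refine Finset.sum_congr rfl fun J _ => ?_
  rw [Finset.filter_congr fun θ hθ => mem_supportedPi_Icc_iff (hcube θ hθ) J]

theorem sum_ncard_supportedPi_Ioo_inter {T : Set (ι → ℝ)}
    (hT : ((univ.pi fun _ => Icc (0 : ℝ) 1) ∩ T).Finite) :
    ∑ J ∈ (Finset.univ : Finset ι).powerset, (supportedPi J (Ioo (0 : ℝ) 1) ∩ T).ncard =
      ((univ.pi fun _ => Ico (0 : ℝ) 1) ∩ T).ncard := by
  classical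
  have hsub : ∀ J : Finset ι, supportedPi J (Ioo (0 : ℝ) 1) ⊆ univ.pi fun _ => Icc 0 1 :=
    supportedPi_subset_pi Ioo_subset_Icc_self (left_mem_Icc.mpr zero_le_one)
  have hIco : (univ.pi fun _ : ι => Ico (0 : ℝ) 1) ⊆ univ.pi fun _ => Icc 0 1 :=
    pi_mono fun _ _ => Ico_subset_Icc_self
  simp_rw [ncard_inter_eq_card_filter (hsub _) hT, ncard_inter_eq_card_filter hIco hT]
  have hcube : ∀ θ ∈ hT.toFinset, θ ∈ univ.pi fun _ => Icc (0 : ℝ) 1 := fun θ hθ =>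
    ((Finite.mem_toFinset hT).mp hθ).1
  rw [Finset.card_eq_sum_card_fiberwise (f := fun θ => ({j | θ j ≠ 0} : Finset ι))
    (t := Finset.univ.powerset) fun θ _ => Finset.mem_powerset.mpr (Finset.subset_univ _)]
  refine Finset.sum_congr rfl fun J _ => ?_
  rw [Finset.filter_filter,
    Finset.filter_congr fun θ hθ => mem_supportedPi_Ioo_iff (hcube θ hθ) J]

end Faces

theorem ncard_pi_Ico_inter_eq_ncard_pi_Ioc_inter {ι : Type*} {T : Set (ι → ℝ)}
    (hT : ∀ θ ∈ T, ∀ z : ι → ℤ, θ + (fun i => (z i : ℝ)) ∈ T) :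
    ((univ.pi fun _ => Ico (0 : ℝ) 1) ∩ T).ncard =
      ((univ.pi fun _ => Ioc (0 : ℝ) 1) ∩ T).ncard := by
  have hIoc : ∀ θ : ι → ℝ, (fun i => toIocMod one_pos 0 (θ i)) =
      θ + fun i => ((-toIocDiv one_pos 0 (θ i) : ℤ) : ℝ) := fun θ => funext fun i => by
    simp [← self_sub_toIocDiv_zsmul, sub_eq_add_neg]
  have hIco : ∀ θ : ι → ℝ, (fun i => toIcoMod one_pos 0 (θ i)) =
      θ + fun i => ((-toIcoDiv one_pos 0 (θ i) : ℤ) : ℝ) := fun θ => funext fun i => by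
    simp [← self_sub_toIcoDiv_zsmul, sub_eq_add_neg]
  refine ncard_congr (fun θ _ i => toIocMod one_pos 0 (θ i)) ?_ ?_ ?_
  · rintro θ ⟨-, hθT⟩
    refine ⟨fun i _ => by simpa using toIocMod_mem_Ioc one_pos 0 (θ i), ?_⟩
    rw [hIoc]
    exact hT θ hθT _
  · rintro θ η ⟨hθ, -⟩ ⟨hη, -⟩ h
    funext i
    have := congr_arg (toIcoMod one_pos 0) (congr_fun h i)
    simp only [toIcoMod_toIocMod] at this
    rwa [(toIcoMod_eq_self one_pos).mpr (by simpa using hθ i trivial),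
      (toIcoMod_eq_self one_pos).mpr (by simpa using hη i trivial)] at this
  · rintro η ⟨hη, hηT⟩
    refine ⟨fun i => toIcoMod one_pos 0 (η i), ⟨fun i _ => ?_, hIco η ▸ hT η hηT _⟩, ?_⟩
    · simpa using toIcoMod_mem_Ico one_pos 0 (η i)
    funext i
    simp only [toIocMod_toIcoMod]
    exact (toIocMod_eq_self one_pos).mpr (by simpa using hη i trivial)

section Parallelepiped

variable {ι E : Type*} [Fintype ι] [AddCommGroup E] [Module ℝ E]

noncomputable def parallelepipedChart (c : E) (v : ι → E) : (ι → ℝ) →ᵃ[ℝ] E :=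
  AffineMap.const ℝ (ι → ℝ) c + (Fintype.linearCombination ℝ v).toAffineMap

@[simp]
theorem parallelepipedChart_apply (c : E) (v : ι → E) (θ : ι → ℝ) :
    parallelepipedChart c v θ = c + ∑ i, θ i • v i := by
  simp [parallelepipedChart, Fintype.linearCombination_apply]

theorem parallelepipedChart_injective (c : E) {v : ι → E} (hv : LinearIndependent ℝ v) :
    Injective (parallelepipedChart c v) := fun θ η h =>
  hv.fintypeLinearCombination_injective <| by
    simpa [Fintype.linearCombination_apply] using h

theorem sum_segment_diff_add_singleton_eq_image (p : E) (a : ι → E) {v : ι → E}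
    (hv : ∀ j, v j ≠ 0) :
    (∑ j, (segment ℝ (a j) (a j + v j) \ {a j})) + {p} =
      parallelepipedChart (p + ∑ j, a j) v '' univ.pi fun _ => Ioc 0 1 := by
  have hseg : ∀ j, segment ℝ (a j) (a j + v j) \ {a j} =
      (fun t : ℝ => a j + t • v j) '' Ioc 0 1 := by
    intro j
    have hinj : Injective fun t : ℝ => a j + t • v j :=
      (add_right_injective (a j)).comp (smul_left_injective ℝ (hv j))
    rw [segment_eq_image', ← Icc_sdiff_left, image_sdiff hinj, image_singleton]
    simp
  simp_rw [hseg]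
  rw [fintype_sum_image_eq_image_pi, add_singleton, image_image]
  congr 1
  funext θ
  simp [Finset.sum_add_distrib]
  abel

variable [DecidableEq ι]

theorem singleton_add_sum_segment_eq_image (p : E) (a v : ι → E) (J : Finset ι) :
    {p} + ∑ j ∈ J, segment ℝ (a j) (a j + v j) =
      parallelepipedChart (p + ∑ j ∈ J, a j) v '' supportedPi J (Icc 0 1) := by
  have hseg : ∀ j, (if j ∈ J then segment ℝ (a j) (a j + v j) else 0) =
      (fun t : ℝ => (if j ∈ J then a j else 0) + t • v j) ''
        if j ∈ J then Icc 0 1 else {0} := by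
    intro j
    split_ifs
    · simp [segment_eq_image']
    · simp [Set.singleton_zero]
  rw [← Finset.univ_inter J, ← Finset.sum_ite_mem, Finset.univ_inter]
  simp_rw [hseg]
  rw [fintype_sum_image_eq_image_pi, singleton_add, image_image, supportedPi]
  congr 1
  funext θ
  simp [Finset.sum_add_distrib, Finset.sum_ite_mem, add_assoc]

theorem polyDim_singleton_add_sum_segment (p : E) (a : ι → E) {v : ι → E}
    (hv : LinearIndependent ℝ v) (J : Finset ι) :
    polyDim ({p} + ∑ j ∈ J, segment ℝ (a j) (a j + v j)) = #J := by
  rw [singleton_add_sum_segment_eq_image, AffineMap.polyDim_image_of_injective _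
    (parallelepipedChart_injective _ hv), polyDim_supportedPi_Icc]

end Parallelepiped

section LatticePoints

variable {ι E : Type*} [Fintype ι] [AddCommGroup E] [Module ℝ E] (L : AddSubgroup E)
  {p : E} {a v : ι → E}

theorem ncard_image_parallelepipedChart_inter {c : E} (hc : c ∈ L) (hv : LinearIndependent ℝ v)
    (X : Set (ι → ℝ)) :
    (parallelepipedChart (p + c) v '' X ∩ L).ncard =
      (X ∩ parallelepipedChart p v ⁻¹' L).ncard := by
  have hshift : ∀ θ, parallelepipedChart (p + c) v θ = c + parallelepipedChart p v θ := by
    simp [add_assoc, add_left_comm]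
  rw [← image_inter_preimage, ncard_image_of_injective _ (parallelepipedChart_injective _ hv)]
  congr 2
  ext θ
  simp only [mem_preimage, SetLike.mem_coe, hshift, L.add_mem_cancel_left hc]

theorem add_intCast_mem_preimage_parallelepipedChart (hv : ∀ i, v i ∈ L) {θ : ι → ℝ}
    (hθ : θ ∈ parallelepipedChart p v ⁻¹' L) (z : ι → ℤ) :
    θ + (fun i => (z i : ℝ)) ∈ parallelepipedChart p v ⁻¹' L := by
  have h : parallelepipedChart p v (θ + fun i => (z i : ℝ)) =
      parallelepipedChart p v θ + ∑ i, z i • v i := by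
    simp [add_smul, Finset.sum_add_distrib, Int.cast_smul_eq_zsmul, add_assoc]
  rw [mem_preimage, h]
  exact L.add_mem hθ (sum_mem fun i _ => L.zsmul_mem (hv i) _)

theorem ncard_sum_segment_diff_add_singleton_inter (ha : ∀ j, a j ∈ L)
    (hv : LinearIndependent ℝ v) :
    (((∑ j, (segment ℝ (a j) (a j + v j) \ {a j})) + {p}) ∩ L).ncard =
      ((univ.pi fun _ => Ioc 0 1) ∩ parallelepipedChart p v ⁻¹' L).ncard := by
  rw [sum_segment_diff_add_singleton_eq_image _ _ hv.ne_zero,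
    ncard_image_parallelepipedChart_inter L (sum_mem fun j _ => ha j) hv]

variable [DecidableEq ι]

theorem ncard_singleton_add_sum_segment_inter (ha : ∀ j, a j ∈ L) (hv : LinearIndependent ℝ v)
    (J : Finset ι) :
    (({p} + ∑ j ∈ J, segment ℝ (a j) (a j + v j)) ∩ L).ncard =
      (supportedPi J (Icc 0 1) ∩ parallelepipedChart p v ⁻¹' L).ncard := by
  rw [singleton_add_sum_segment_eq_image,
    ncard_image_parallelepipedChart_inter L (sum_mem fun j _ => ha j) hv]

end LatticePoints

theorem intrinsicInterior_singleton_add_sum_segment {ι E : Type*} [Fintype ι] [DecidableEq ι]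
    [NormedAddCommGroup E] [NormedSpace ℝ E] (p : E) (a : ι → E) {v : ι → E}
    (hv : LinearIndependent ℝ v) (J : Finset ι) :
    intrinsicInterior ℝ ({p} + ∑ j ∈ J, segment ℝ (a j) (a j + v j)) =
      parallelepipedChart (p + ∑ j ∈ J, a j) v '' supportedPi J (Ioo 0 1) := by
  rw [singleton_add_sum_segment_eq_image, AffineMap.intrinsicInterior_image_of_injective _
    (parallelepipedChart_injective _ hv), intrinsicInterior_supportedPi_Icc]

theorem neg_one_pow_card_mul_latNatural_singleton_add_sum_segment {ι : Type*} [Fintype ι]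
    [DecidableEq ι] {n : ℕ} {L : AddSubgroup (Fin n → ℝ)} {p : Fin n → ℝ} {a v : ι → Fin n → ℝ}
    (ha : ∀ j, a j ∈ L) (hv : LinearIndependent ℝ v) (J : Finset ι) :
    (-1 : ℤ) ^ #J * latNatural L ({p} + ∑ j ∈ J, segment ℝ (a j) (a j + v j)) =
      (supportedPi J (Ioo 0 1) ∩ parallelepipedChart p v ⁻¹' L).ncard := by
  rw [latNatural, polyDim_singleton_add_sum_segment _ _ hv,
    intrinsicInterior_singleton_add_sum_segment _ _ hv,
    ncard_image_parallelepipedChart_inter L (sum_mem fun j _ => ha j) hv, ← mul_assoc,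
    ← mul_pow, neg_one_mul, neg_neg, one_pow, one_mul]

theorem closure_range_le_range_intCast {ι κ : Type*} {b : ι → κ → ℝ}
    (hb : ∀ i j, ∃ m : ℤ, b i j = m) :
    AddSubgroup.closure (range b) ≤ (AddMonoidHom.compLeft (Int.castAddHom ℝ) κ).range := by
  rw [AddSubgroup.closure_le]
  rintro _ ⟨i, rfl⟩
  exact ⟨fun j => (hb i j).choose, funext fun j => (hb i j).choose_spec.symm⟩

theorem Set.Finite.of_isBounded_of_subset_range_intCast {κ : Type*} [Fintype κ]
    {s : Set (κ → ℝ)} (hs : Bornology.IsBounded s)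
    (hint : s ⊆ range (AddMonoidHom.compLeft (Int.castAddHom ℝ) κ)) : s.Finite := by
  obtain ⟨R, hR⟩ := isBounded_iff_forall_norm_le.mp hs
  refine ((Finite.pi fun _ => finite_Icc (-⌈R⌉) ⌈R⌉).image
    (AddMonoidHom.compLeft (Int.castAddHom ℝ) κ)).subset ?_
  rintro x hx
  obtain ⟨z, rfl⟩ := hint hx
  refine ⟨z, fun i _ => ?_, rfl⟩
  have hzi : |(z i : ℝ)| ≤ R := (norm_le_pi_norm _ i).trans (hR _ hx)
  have hR' := Int.le_ceil R
  constructor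
  · have : -(⌈R⌉ : ℝ) ≤ z i := by linarith [(abs_le.mp hzi).1]
    exact_mod_cast this
  · have : (z i : ℝ) ≤ ⌈R⌉ := by linarith [(abs_le.mp hzi).2]
    exact_mod_cast this

theorem finite_pi_Icc_inter_preimage_parallelepipedChart {ι κ : Type*} [Fintype ι] [Fintype κ]
    {L : AddSubgroup (κ → ℝ)}
    (hL : L ≤ (AddMonoidHom.compLeft (Int.castAddHom ℝ) κ).range)
    (p : κ → ℝ) {v : ι → κ → ℝ} (hv : LinearIndependent ℝ v) :
    ((univ.pi fun _ => Icc (0 : ℝ) 1) ∩ parallelepipedChart p v ⁻¹' L).Finite := by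
  have hbdd : Bornology.IsBounded (parallelepipedChart p v '' univ.pi fun _ => Icc (0 : ℝ) 1) :=
    ((isCompact_univ_pi fun _ => isCompact_Icc).image
      (parallelepipedChart p v).continuous_of_finiteDimensional).isBounded
  have hfin := Finite.of_isBounded_of_subset_range_intCast (hbdd.subset inter_subset_left)
    (inter_subset_right.trans fun x hx => hL hx)
  refine (hfin.preimage (parallelepipedChart_injective p hv).injOn).subset ?_
  rintro θ ⟨hθ, hθL⟩
  exact ⟨mem_image_of_mem _ hθ, hθL⟩

theorem segments_alternating_sum_halfopen_count_general (n : ℕ)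
    (b : Fin n → (Fin n → ℝ))
    (hb_int : ∀ i j, ∃ m : ℤ, b i j = (m : ℝ))
    (L : AddSubgroup (Fin n → ℝ)) (hL : L = AddSubgroup.closure (Set.range b))
    (a v : Fin n → (Fin n → ℝ))
    (ha : ∀ j, a j ∈ L) (hav : ∀ j, a j + v j ∈ L)
    (hv_indep : LinearIndependent ℝ v)
    (p : Fin n → ℝ) :
    (∑ J ∈ (Finset.univ : Finset (Fin n)).powerset, (-1 : ℤ) ^ J.card *
        latNatural L (({p} : Set (Fin n → ℝ)) + ∑ j ∈ J, segment ℝ (a j) (a j + v j)) =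
      ∑ J ∈ (Finset.univ : Finset (Fin n)).powerset, (-1 : ℤ) ^ (n - J.card) *
        (((({p} : Set (Fin n → ℝ)) + ∑ j ∈ J, segment ℝ (a j) (a j + v j)) ∩
          (L : Set (Fin n → ℝ))).ncard : ℤ)) ∧
    (∑ J ∈ (Finset.univ : Finset (Fin n)).powerset, (-1 : ℤ) ^ (n - J.card) *
        (((({p} : Set (Fin n → ℝ)) + ∑ j ∈ J, segment ℝ (a j) (a j + v j)) ∩
          (L : Set (Fin n → ℝ))).ncard : ℤ) =
      ((((∑ j, (segment ℝ (a j) (a j + v j) \ {a j})) + ({p} : Set (Fin n → ℝ))) ∩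
        (L : Set (Fin n → ℝ))).ncard : ℤ)) := by
  have hfin : ((univ.pi fun _ => Icc 0 1) ∩ parallelepipedChart p v ⁻¹' L).Finite :=
    finite_pi_Icc_inter_preimage_parallelepipedChart (hL ▸ closure_range_le_range_intCast hb_int)
      p hv_indep
  have hvL : ∀ j, v j ∈ L := fun j => by simpa using L.sub_mem (hav j) (ha j)
  have hper := ncard_pi_Ico_inter_eq_ncard_pi_Ioc_inter fun θ hθ z =>
    add_intCast_mem_preimage_parallelepipedChart (p := p) L hvL hθ z
  have hIcc := sum_neg_one_pow_mul_ncard_supportedPi_Icc_inter hfin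
  rw [Fintype.card_fin] at hIcc
  simp_rw [ncard_singleton_add_sum_segment_inter L ha hv_indep,
    neg_one_pow_card_mul_latNatural_singleton_add_sum_segment ha hv_indep,
    ncard_sum_segment_diff_add_singleton_inter L ha hv_indep, hIcc, and_true]
  exact_mod_cast (sum_ncard_supportedPi_Ioo_inter hfin).trans hper

/-- **Step (B) of the proof of Proposition 3.2.** Let `Δ_j = [a_j, a_j+v_j]`
be linearly independent segments with endpoints in a full-rank lattice `L ⊆ ℤ^n` and
`Δ_0 = {p}` a point.  Then
`∑_J (-1)^{|J|} natural(p + Δ_J) = ∑_J (-1)^{n-|J|} #((p + Δ_J) ∩ L)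
  = #((hatΔ_1 + ⋯ + hatΔ_n + p) ∩ L)`,
where `hatΔ_j = Δ_j \ {a_j}` and `natural(B) = (-1)^{dim B} #(relint(B) ∩ L)`. -/
theorem segments_alternating_sum_halfopen_count (n : ℕ) (hn : 0 < n)
    (b : Fin n → (Fin n → ℝ))
    (hb_int : ∀ i j, ∃ m : ℤ, b i j = (m : ℝ))
    (hb_indep : LinearIndependent ℝ b)
    (L : AddSubgroup (Fin n → ℝ)) (hL : L = AddSubgroup.closure (Set.range b))
    (a v : Fin n → (Fin n → ℝ))
    (ha : ∀ j, a j ∈ L) (hav : ∀ j, a j + v j ∈ L)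
    (hv_indep : LinearIndependent ℝ v)
    (p : Fin n → ℝ) :
    (∑ J ∈ (Finset.univ : Finset (Fin n)).powerset, (-1 : ℤ) ^ J.card *
        latNatural L (({p} : Set (Fin n → ℝ)) + ∑ j ∈ J, segment ℝ (a j) (a j + v j)) =
      ∑ J ∈ (Finset.univ : Finset (Fin n)).powerset, (-1 : ℤ) ^ (n - J.card) *
        (((({p} : Set (Fin n → ℝ)) + ∑ j ∈ J, segment ℝ (a j) (a j + v j)) ∩
          (L : Set (Fin n → ℝ))).ncard : ℤ)) ∧
    (∑ J ∈ (Finset.univ : Finset (Fin n)).powerset, (-1 : ℤ) ^ (n - J.card) *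
        (((({p} : Set (Fin n → ℝ)) + ∑ j ∈ J, segment ℝ (a j) (a j + v j)) ∩
          (L : Set (Fin n → ℝ))).ncard : ℤ) =
      ((((∑ j, (segment ℝ (a j) (a j + v j) \ {a j})) + ({p} : Set (Fin n → ℝ))) ∩
        (L : Set (Fin n → ℝ))).ncard : ℤ)) :=
  segments_alternating_sum_halfopen_count_general n b hb_int L hL a v ha hav hv_indep p
end
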